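/- arXiv:1202.4687 — 3 statements merged into one kernel-verified Lean document; each statement's English description precedes it below -/
import Mathlib

section
/- Let x be an integer with gcd(x,6) = 1 and x ≥ 7, and let N = ⌊⌊√x⌋/6⌋ + 1. With S₁, S₂, S defined as S₁(x) = (-1/N)·Σ_{k=1}^{N} ⌊⌊x/(6k+1)⌋ - x/(6k+1)⌋, S₂(x) = (-1/N)·Σ_{k=1}^{N} ⌊⌊x/(6k-1)⌋ - x/(6k-1)⌋, S(x) = (S₁(x)+S₂(x))/2, if x is composite then 0 ≤ S(x) < 1. -/
noncomputable def Npar (x : ℕ) : ℕ := Nat.sqrt x / 6 + 1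

noncomputable def S1 (x : ℕ) : ℚ :=
  (-1 / (Npar x : ℚ)) *
    ∑ k ∈ Finset.Icc 1 (Npar x),
      (⌊((x / (6 * k + 1) : ℕ) : ℚ) - (x : ℚ) / ((6 * k + 1 : ℕ) : ℚ)⌋ : ℚ)

noncomputable def S2 (x : ℕ) : ℚ :=
  (-1 / (Npar x : ℚ)) *
    ∑ k ∈ Finset.Icc 1 (Npar x),
      (⌊((x / (6 * k - 1) : ℕ) : ℚ) - (x : ℚ) / ((6 * k - 1 : ℕ) : ℚ)⌋ : ℚ)

noncomputable def S (x : ℕ) : ℚ := (S1 x + S2 x) / 2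

/-! Each summand `⌊⌊x/d⌋ - x/d⌋` is `0` when `d ∣ x` and `-1` otherwise, so `S1 x` and `S2 x`
are the proportions of `k ∈ [1, N]` for which `6k + 1`, resp. `6k - 1`, does not divide `x`; both
lie in `[0, 1]`. A composite `x` coprime to `6` has its least prime factor `p ≤ √x` with
`p ≡ ±1 (mod 6)`, so `p = 6k ± 1` for some `k ≤ N`, and one of the two proportions is `< 1`. -/

open Finset

noncomputable def nonDvdFrac (K : Type*) [DivisionRing K] (x N : ℕ) (d : ℕ → ℕ) : K :=
  #{k ∈ Icc 1 N | ¬ d k ∣ x} / N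

section nonDvdFrac

variable {K : Type*} [Field K] [LinearOrder K] [IsStrictOrderedRing K]

theorem floor_natCast_div_sub_div [FloorRing K] (x d : ℕ) (hd : 0 < d) :
    ⌊((x / d : ℕ) : K) - (x : K) / (d : K)⌋ = if d ∣ x then 0 else -1 := by
  have hd' : (0 : K) < d := by exact_mod_cast hd
  have hsplit : ((x / d : ℕ) : K) - (x : K) / (d : K) = -(((x % d : ℕ) : K) / d) := by
    have := congrArg (Nat.cast (R := K)) (Nat.div_add_mod x d)
    push_cast at this
    field_simp
    linarith
  rw [hsplit]
  split_ifs with hdvd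
  · simp [Nat.mod_eq_zero_of_dvd hdvd]
  · have hpos : (0 : K) < ((x % d : ℕ) : K) / d :=
      div_pos (by exact_mod_cast Nat.pos_of_ne_zero (mt Nat.dvd_of_mod_eq_zero hdvd)) hd'
    have hlt : ((x % d : ℕ) : K) / d < 1 :=
      (div_lt_one hd').2 (by exact_mod_cast Nat.mod_lt x hd)
    rw [Int.floor_eq_iff]
    push_cast
    constructor <;> linarith

theorem neg_avg_floor_eq_nonDvdFrac [FloorRing K] (x N : ℕ) (d : ℕ → ℕ)
    (hd : ∀ k ∈ Icc 1 N, 0 < d k) :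
    (-1 / (N : K)) * ∑ k ∈ Icc 1 N, (⌊((x / d k : ℕ) : K) - (x : K) / (d k : K)⌋ : K) =
      nonDvdFrac K x N d := by
  rw [sum_congr rfl fun k hk => by rw [floor_natCast_div_sub_div x (d k) (hd k hk)]]
  simp [nonDvdFrac, apply_ite (Int.cast (R := K)), sum_ite, div_eq_inv_mul]

variable (x N : ℕ) (d : ℕ → ℕ)

theorem nonDvdFrac_nonneg : 0 ≤ nonDvdFrac K x N d := by
  unfold nonDvdFrac; positivity

theorem nonDvdFrac_le_one : nonDvdFrac K x N d ≤ 1 := by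
  refine div_le_one_of_le₀ ?_ N.cast_nonneg
  exact_mod_cast (card_filter_le _ _).trans (by simp)

theorem nonDvdFrac_lt_one {k : ℕ} (hk : k ∈ Icc 1 N) (hdvd : d k ∣ x) :
    nonDvdFrac K x N d < 1 := by
  have hN : (0 : K) < N := by exact_mod_cast (mem_Icc.1 hk).1.trans (mem_Icc.1 hk).2
  refine (div_lt_one hN).2 ?_
  have hlt := card_lt_card ((filter_ssubset (p := fun k => ¬ d k ∣ x)).2 ⟨k, hk, not_not.2 hdvd⟩)
  exact_mod_cast hlt.trans_le (by simp)

end nonDvdFrac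

theorem S1_eq_nonDvdFrac (x : ℕ) : S1 x = nonDvdFrac ℚ x (Npar x) (fun k => 6 * k + 1) :=
  neg_avg_floor_eq_nonDvdFrac x _ _ fun k _ => by omega

theorem S2_eq_nonDvdFrac (x : ℕ) : S2 x = nonDvdFrac ℚ x (Npar x) (fun k => 6 * k - 1) :=
  neg_avg_floor_eq_nonDvdFrac x _ _ fun k hk => by have := (mem_Icc.1 hk).1; omega

theorem Nat.mod_six_eq_one_or_five_of_coprime {n : ℕ} (h : n.Coprime 6) :
    n % 6 = 1 ∨ n % 6 = 5 := by
  have h' : Nat.gcd (n % 6) 6 = 1 := by rw [← Nat.gcd_rec, Nat.gcd_comm]; exact h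
  have : n % 6 < 6 := Nat.mod_lt n (by norm_num)
  interval_cases n % 6 <;> simp_all

theorem exists_dvd_six_mul_add_one_or_sub_one {x : ℕ} (hx : x ≠ 1) (hco : x.Coprime 6)
    (hc : ¬ x.Prime) : ∃ k ∈ Icc 1 (Npar x), 6 * k + 1 ∣ x ∨ 6 * k - 1 ∣ x := by
  have hx0 : 0 < x := Nat.pos_of_ne_zero fun h => by simp [h] at hco
  have hp_le : x.minFac ≤ x.sqrt := Nat.le_sqrt'.2 (Nat.minFac_sq_le_self hx0 hc)
  have hmod := Nat.mod_six_eq_one_or_five_of_coprime (hco.coprime_dvd_left x.minFac_dvd)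
  have hp2 := (Nat.minFac_prime hx).two_le
  rcases hmod with h1 | h5
  · exact ⟨x.minFac / 6, mem_Icc.2 ⟨by omega, by unfold Npar; omega⟩,
      Or.inl (by rw [show 6 * (x.minFac / 6) + 1 = x.minFac by omega]; exact x.minFac_dvd)⟩
  · exact ⟨x.minFac / 6 + 1, mem_Icc.2 ⟨by omega, by unfold Npar; omega⟩,
      Or.inr (by rw [show 6 * (x.minFac / 6 + 1) - 1 = x.minFac by omega]; exact x.minFac_dvd)⟩

theorem S_lt_one_of_composite (x : ℕ) (hx : 7 ≤ x) (hco : Nat.Coprime x 6)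
    (hc : ¬ x.Prime) : 0 ≤ S x ∧ S x < 1 := by
  obtain ⟨k, hk, hdvd⟩ := exists_dvd_six_mul_add_one_or_sub_one (by omega) hco hc
  have h1 := nonDvdFrac_nonneg (K := ℚ) x (Npar x) (fun k => 6 * k + 1)
  have h2 := nonDvdFrac_nonneg (K := ℚ) x (Npar x) (fun k => 6 * k - 1)
  have h1' := nonDvdFrac_le_one (K := ℚ) x (Npar x) (fun k => 6 * k + 1)
  have h2' := nonDvdFrac_le_one (K := ℚ) x (Npar x) (fun k => 6 * k - 1)
  rw [S, S1_eq_nonDvdFrac, S2_eq_nonDvdFrac]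
  rcases hdvd with hdvd | hdvd
  · have := nonDvdFrac_lt_one (K := ℚ) x _ (fun k => 6 * k + 1) hk hdvd
    constructor <;> linarith
  · have := nonDvdFrac_lt_one (K := ℚ) x _ (fun k => 6 * k - 1) hk hdvd
    constructor <;> linarith
end

section
/- For every n ≥ 1, the n-th prime p_n satisfies p_n ≤ 2(⌊n log n⌋ + 1), where log is the natural logarithm and the inequality is interpreted as p₁ = 2 ≤ 2, and for n ≥ 2, p_n ≤ 2(⌊n log n⌋ + 1). -/
/-!
For `n ≥ 1024`, Chebyshev's lower bound `π x ≥ ((x - 1) log 2 - log (x + 2)) / log x` at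
`x = 2 n log n` already yields `n` primes up to `x`. For `2 ≤ n < 1024` the kernel enumerates the
primes up to `p₁₀₂₃ = 8147` by trial division and checks `3 ^ pₙ ≤ 3 n ^ (2 n)` for each of them,
which gives `pₙ - 1 ≤ 2 n log n` since `log 3 > 1`. Finally `p - 1 ≤ 2 x` implies
`p ≤ 2 (⌊x⌋ + 1)`.
-/

open Real

def trialDivision (n : ℕ) : ℕ → ℕ → Bool
  | 0, _ => false
  | fuel + 1, d => n < d * d || (n % d != 0 && trialDivision n fuel (d + 1))

theorem prime_of_trialDivision {n : ℕ} (hn : 2 ≤ n) :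
    ∀ {fuel d : ℕ}, trialDivision n fuel d = true → (∀ m, 2 ≤ m → m < d → ¬m ∣ n) → n.Prime
  | 0, _, h, _ => by simp [trialDivision] at h
  | fuel + 1, d, h, hd => by
    simp only [trialDivision, Bool.or_eq_true, decide_eq_true_eq, Bool.and_eq_true,
      bne_iff_ne, ne_eq] at h
    rcases h with hlt | ⟨hmod, hrest⟩
    · by_contra hnp
      have hsq := Nat.minFac_sq_le_self (by omega) hnp
      refine hd _ (Nat.minFac_prime (by omega)).two_le ?_ (Nat.minFac_dvd n)
      nlinarith
    · refine prime_of_trialDivision hn hrest fun m hm2 hmd hdvd => ?_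
      rcases (Nat.lt_succ_iff_lt_or_eq.mp hmd) with hlt | rfl
      · exact hd m hm2 hlt hdvd
      · exact hmod (Nat.mod_eq_zero_of_dvd hdvd)

def isPrimeByTrialDivision (n : ℕ) : Bool := 2 ≤ n && trialDivision n n 2

theorem prime_of_isPrimeByTrialDivision {n : ℕ} (h : isPrimeByTrialDivision n = true) :
    n.Prime := by
  simp only [isPrimeByTrialDivision, Bool.and_eq_true, decide_eq_true_eq] at h
  exact prime_of_trialDivision h.1 h.2 fun m hm2 hm _ => by omega

def checkNthBound (test : ℕ → Bool) (ok : ℕ → ℕ → Bool) (N : ℕ) :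
    (fuel k c : ℕ) → Bool
  | 0, _, c => N ≤ c
  | fuel + 1, k, c =>
    if test k then ok (c + 1) k && checkNthBound test ok N fuel (k + 1) (c + 1)
    else checkNthBound test ok N fuel (k + 1) c

theorem exists_nth_le_of_checkNthBound {p : ℕ → Prop} [DecidablePred p] {test : ℕ → Bool}
    (htest : ∀ k, test k = true → p k) {ok : ℕ → ℕ → Bool} {N : ℕ} :
    ∀ {fuel k c : ℕ}, checkNthBound test ok N fuel k c = true → c ≤ Nat.count p k →
      ∀ n, c < n → n ≤ N → ∃ q, Nat.nth p (n - 1) ≤ q ∧ ok n q = true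
  | 0, _, c, h, _, n, hcn, hnN => by
    simp only [checkNthBound, decide_eq_true_eq] at h
    omega
  | fuel + 1, k, c, h, hc, n, hcn, hnN => by
    rw [checkNthBound] at h
    split_ifs at h with hk
    · rw [Bool.and_eq_true] at h
      have hck : c + 1 ≤ Nat.count p (k + 1) := by
        rw [Nat.count_succ, if_pos (htest k hk)]
        omega
      rcases Nat.lt_or_ge (c + 1) n with hlt | hle
      · exact exists_nth_le_of_checkNthBound htest h.2 hck n hlt hnN
      · obtain rfl : n = c + 1 := by omega
        refine ⟨k, Nat.lt_succ_iff.mp (Nat.nth_lt_of_lt_count ?_), h.1⟩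
        rwa [Nat.add_sub_cancel]
    · exact exists_nth_le_of_checkNthBound htest h
        (hc.trans (Nat.count_monotone _ (Nat.le_succ k))) n hcn hnN

theorem one_lt_log_three : 1 < log 3 := by
  rw [lt_log_iff_exp_lt (by norm_num)]
  linarith [exp_one_lt_d9]

theorem sub_one_le_two_mul_mul_log_of_three_pow_le {n q : ℕ} (h : 3 ^ q ≤ 3 * n ^ (2 * n)) :
    (q : ℝ) - 1 ≤ 2 * n * log n := by
  have hpos : (0 : ℝ) < 3 ^ q := by positivity
  have hreal : (3 : ℝ) ^ q ≤ 3 * (n : ℝ) ^ (2 * n) := by exact_mod_cast h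
  have hpow : (n : ℝ) ^ (2 * n) ≠ 0 := fun h0 => by rw [h0] at hreal; linarith
  have hlog := log_le_log hpos hreal
  rw [log_mul (by norm_num) hpow, log_pow, log_pow] at hlog
  have hnlog : 0 ≤ (n : ℝ) * log n := by positivity
  push_cast at hlog
  rcases Nat.eq_zero_or_pos q with rfl | hq
  · push_cast; linarith
  · have : (1 : ℝ) ≤ q := by exact_mod_cast hq
    nlinarith [one_lt_log_three]

-- `2` is counted in advance: `3 ^ q ≤ 3 * n ^ (2 * n)` fails for `n = 1`
theorem checkNthBound_isPrimeByTrialDivision_1023 :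
    checkNthBound isPrimeByTrialDivision (fun n q => 3 ^ q ≤ 3 * n ^ (2 * n)) 1023 8200 3 1
      = true := by
  decide +kernel

theorem nth_prime_sub_one_le_of_le_1023 {n : ℕ} (hn : 2 ≤ n) (hn' : n ≤ 1023) :
    (Nat.nth Nat.Prime (n - 1) : ℝ) - 1 ≤ 2 * n * log n := by
  obtain ⟨q, hq, hok⟩ := exists_nth_le_of_checkNthBound
    (fun _ => prime_of_isPrimeByTrialDivision) checkNthBound_isPrimeByTrialDivision_1023
    (by decide) n hn hn'
  have hq' : (Nat.nth Nat.Prime (n - 1) : ℝ) ≤ q := by exact_mod_cast hq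
  linarith [sub_one_le_two_mul_mul_log_of_three_pow_le (by simpa using hok)]

theorem nth_prime_le_of_le_primeCounting {n N : ℕ} (hn : 1 ≤ n) (h : n ≤ Nat.primeCounting N) :
    Nat.nth Nat.Prime (n - 1) ≤ N :=
  have h' : n ≤ Nat.count Nat.Prime (N + 1) := h
  Nat.lt_add_one_iff.mp <| Nat.nth_lt_of_lt_count <| Nat.sub_one_lt_of_le hn h'

theorem le_primeCounting_floor_two_mul_mul_log {n : ℕ} (hn : 1024 ≤ n) :
    n ≤ Nat.primeCounting ⌊2 * n * log n⌋₊ := by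
  have ha₁ := log_two_gt_d9
  have ha₂ := log_two_lt_d9
  have hn' : (1024 : ℝ) ≤ n := by exact_mod_cast hn
  have hL : 10 * log 2 ≤ log n := by
    have h1024 : log ((2 : ℝ) ^ 10) = 10 * log 2 := by rw [log_pow]; norm_num
    rw [← h1024]
    exact log_le_log (by norm_num) (by norm_num; linarith)
  have hLpos : 0 < log n := by linarith
  have hx : 1 < 2 * n * log n := by nlinarith
  have hlogx : log (2 * n * log n) = log 2 + log n + log (log n) := by
    rw [log_mul (by positivity) hLpos.ne', log_mul (by norm_num) (by positivity)]
  have hlogx₂ : log (2 * n * log n + 2) ≤ 2 * log 2 + log n + log (log n) := by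
    calc log (2 * n * log n + 2) ≤ log (2 ^ 2 * n * log n) :=
          log_le_log (by positivity) (by nlinarith)
      _ = 2 * log 2 + log n + log (log n) := by
        rw [log_mul (by positivity) hLpos.ne', log_mul (by norm_num) (by positivity), log_pow]
        push_cast; ring
  -- the tangent line of `log` at `8`, which is close to `log 1024 ≈ 6.93`
  have hlogL : log (log n) ≤ 3 * log 2 + log n / 8 - 1 := by
    have h8 : log (log n) = log (2 ^ 3) + log (log n / 8) := by
      rw [← log_mul (by norm_num) (by positivity)]
      ring_nf
    rw [h8, log_pow]
    push_cast
    linarith [log_le_sub_one_of_pos (show 0 < log n / 8 by positivity)]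
  have key : (n : ℝ) * log (2 * n * log n) ≤
      (2 * n * log n - 1) * log 2 - log (2 * n * log n + 2) := by
    rw [hlogx]
    have hslope : 9 / 8 ≤ n * (2 * log 2 - 9 / 8) := by nlinarith
    have hconst : 9 / 8 * (10 * log 2) + 6 * log 2 - 1 ≤
        n * (20 * log 2 ^ 2 - 61 / 4 * log 2 + 1) := by
      nlinarith
    nlinarith [mul_le_mul_of_nonneg_left hlogL (by positivity : (0 : ℝ) ≤ n + 1),
      mul_nonneg (sub_nonneg.2 hslope) (sub_nonneg.2 hL)]
  have hpi := Chebyshev.pi_ge' hx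
  rw [div_le_iff₀ (log_pos hx)] at hpi
  have : (n : ℝ) ≤ Nat.primeCounting ⌊2 * n * log n⌋₊ :=
    le_of_mul_le_mul_right (key.trans hpi) (log_pos hx)
  exact_mod_cast this

theorem nth_prime_sub_one_le_two_mul_mul_log {n : ℕ} (hn : 2 ≤ n) :
    (Nat.nth Nat.Prime (n - 1) : ℝ) - 1 ≤ 2 * n * log n := by
  rcases Nat.lt_or_ge n 1024 with hsmall | hlarge
  · exact nth_prime_sub_one_le_of_le_1023 hn (by omega)
  · have hle := nth_prime_le_of_le_primeCounting (by omega)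
      (le_primeCounting_floor_two_mul_mul_log hlarge)
    have hpos : 0 ≤ 2 * (n : ℝ) * log n := by positivity
    linarith [(Nat.cast_le.mpr hle).trans (Nat.floor_le hpos)]

theorem le_two_mul_floor_add_one_of_sub_one_le {p : ℕ} {x : ℝ} (h : (p : ℝ) - 1 ≤ 2 * x) :
    (p : ℤ) ≤ 2 * (⌊x⌋ + 1) := by
  have hlt : (p : ℝ) < ((2 * ⌊x⌋ + 3 : ℤ) : ℝ) := by
    push_cast
    linarith [Int.lt_floor_add_one x]
  have : (p : ℤ) < 2 * ⌊x⌋ + 3 := by exact_mod_cast hlt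
  omega

theorem nth_prime_le_bound (n : ℕ) (hn : 1 ≤ n) :
    (Nat.nth Nat.Prime (n - 1) : ℤ) ≤ 2 * (⌊(n : ℝ) * Real.log n⌋ + 1) := by
  obtain rfl | hn := hn.eq_or_lt
  · simp [Nat.nth_prime_zero_eq_two]
  · refine le_two_mul_floor_add_one_of_sub_one_le ?_
    linarith [nth_prime_sub_one_le_two_mul_mul_log hn]
end

section
/- For n ≥ 4, p_n = 7 + Σ_{x=7}^{2(⌊n log n⌋ + 1)} ⌊2n/(π(x)+n+1)⌋, where p_n is the n-th prime, π the prime counting function, and log the natural logarithm. -/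
/-!
The summand `2n / (π x + n + 1)` is `1` when `π x < n`, i.e. `x < p_n`, and `0` otherwise, so the
sum counts the `x` with `7 ≤ x < p_n`, which is `p_n - 7` as soon as the range of summation reaches
`p_n`, i.e. `p_n ≤ 2 (⌊n log n⌋ + 1)`, equivalently `n ≤ π (2 (⌊n log n⌋ + 1))`.

For `n ≥ 1024` this follows from Chebyshev's bound `N log 2 - log (N + 1) ≤ π N log N`, together
with `log log n ≤ log n / 8 + log 8 - 1`. For `4 ≤ n < 1024` it is checked by the kernel: if
`L a ≤ a log a` with `L` monotone, then every `n` with `a ≤ n ≤ π (2 L a + 2)` is fine, and fifteen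
such intervals cover `[4, 1024)`; `π` is bounded below by a trial-division prime count.
-/

open Real

-- Running out of fuel answers `false`, so a `true` answer is correct for any fuel.
-- `Nat.blt` rather than `decide (_ < _)` keeps the evaluation by the kernel fast.
def noDivisorFrom (n : ℕ) : ℕ → ℕ → Bool
  | _, 0 => false
  | d, fuel + 1 => Nat.blt n (d * d) || (Nat.blt 0 (n % d) && noDivisorFrom n (d + 1) fuel)

theorem not_dvd_of_noDivisorFrom {n d fuel m : ℕ} (h : noDivisorFrom n d fuel = true)
    (hdm : d ≤ m) (hmn : m * m ≤ n) : ¬m ∣ n := by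
  induction fuel generalizing d with
  | zero => simp [noDivisorFrom] at h
  | succ fuel ih =>
    simp only [noDivisorFrom, Bool.or_eq_true, Bool.and_eq_true, Nat.blt_eq] at h
    rcases h with hlt | ⟨hmod, h⟩
    · nlinarith [Nat.mul_le_mul hdm hdm]
    · rcases hdm.eq_or_lt with rfl | hlt
      · rw [Nat.dvd_iff_mod_eq_zero]; omega
      · exact ih h hlt

def isPrimeTrial (n : ℕ) : Bool := Nat.ble 2 n && noDivisorFrom n 2 n

theorem prime_of_isPrimeTrial {n : ℕ} (h : isPrimeTrial n = true) : n.Prime := by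
  rw [isPrimeTrial, Bool.and_eq_true, Nat.ble_eq] at h
  refine Nat.prime_def_le_sqrt.2 ⟨h.1, fun m hm hmn => ?_⟩
  exact not_dvd_of_noDivisorFrom h.2 hm (Nat.le_sqrt.1 hmn)

def primeCountTrial (x : ℕ) : ℕ := (List.range (x + 1)).countP isPrimeTrial

theorem primeCountTrial_le_primeCounting (x : ℕ) : primeCountTrial x ≤ Nat.primeCounting x :=
  List.countP_mono_left fun k _ hk => by simpa using prime_of_isPrimeTrial hk

def jumpCheck (h : ℕ → ℕ) (N : ℕ) : ℕ → ℕ → Bool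
  | 0, _ => false
  | fuel + 1, a => Nat.ble N a || (Nat.ble a (h a) && jumpCheck h N fuel (h a + 1))

theorem le_of_jumpCheck {h H : ℕ → ℕ} (hH : Monotone H) (hhH : ∀ n, h n ≤ H n)
    {N fuel a : ℕ} (hc : jumpCheck h N fuel a = true) {n : ℕ} (han : a ≤ n) (hnN : n < N) :
    n ≤ H n := by
  induction fuel generalizing a with
  | zero => simp [jumpCheck] at hc
  | succ fuel ih =>
    simp only [jumpCheck, Bool.or_eq_true, Bool.and_eq_true, Nat.ble_eq] at hc
    rcases hc with hNa | ⟨-, hc⟩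
    · omega
    · rcases le_or_gt n (h a) with hn | hn
      · exact hn.trans ((hhH a).trans (hH han))
      · exact ih hc hn

-- `6931 / 10000 < log 2` and `2 ^ Nat.log 2 n ≤ n`.
def nLogNLowerBound (n : ℕ) : ℕ := n * Nat.log 2 n * 6931 / 10000

theorem nLogNLowerBound_mono : Monotone nLogNLowerBound := fun _ _ hmn =>
  Nat.div_le_div_right <| Nat.mul_le_mul_right _ <|
    Nat.mul_le_mul hmn (Nat.log_mono_right hmn)

theorem nLogNLowerBound_le (n : ℕ) : (nLogNLowerBound n : ℝ) ≤ n * log n := by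
  rcases Nat.eq_zero_or_pos n with rfl | hn
  · simp [nLogNLowerBound]
  have hpow : ((2 : ℕ) ^ Nat.log 2 n : ℝ) ≤ n := by exact_mod_cast Nat.pow_log_le_self 2 hn.ne'
  have hlog : (Nat.log 2 n : ℝ) * log 2 ≤ log n := by
    rw [← log_pow]; exact log_le_log (by positivity) (by exact_mod_cast hpow)
  calc (nLogNLowerBound n : ℝ) ≤ n * Nat.log 2 n * 6931 / 10000 := by
        unfold nLogNLowerBound; exact_mod_cast Nat.cast_div_le
    _ ≤ n * (Nat.log 2 n * log 2) := by
        have := log_two_gt_d9; have : (0 : ℝ) ≤ n * Nat.log 2 n := by positivity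
        nlinarith
    _ ≤ n * log n := by gcongr

theorem le_primeCounting_of_lt_1024 {n : ℕ} (h4 : 4 ≤ n) (hn : n < 1024) :
    n ≤ Nat.primeCounting (2 * (⌊n * log n⌋₊ + 1)) := by
  have hcheck :
      jumpCheck (fun a => primeCountTrial (2 * nLogNLowerBound a + 2)) 1024 16 4 = true := by
    decide +kernel
  have hmono : Monotone fun a => Nat.primeCounting (2 * nLogNLowerBound a + 2) :=
    Nat.monotone_primeCounting.comp fun a b hab => by
      have := nLogNLowerBound_mono hab; omega
  refine (le_of_jumpCheck hmono (fun a => primeCountTrial_le_primeCounting _) hcheck h4 hn).trans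
    (Nat.monotone_primeCounting ?_)
  have := Nat.le_floor (nLogNLowerBound_le n)
  omega

theorem log_two_add_log_add_le_mul {t : ℝ} (ht : 10 * log 2 ≤ t) :
    log 2 + log t + 1 / 100 ≤ (2 * log 2 - 1) * t := by
  have hL := log_two_gt_d9
  have ht0 : 0 < t := by linarith
  -- tangent line of `log` at `8 = 2 ^ 3`
  have htan : log t ≤ t / 8 + 3 * log 2 - 1 := by
    have h := log_le_sub_one_of_pos (show 0 < t / 8 by positivity)
    rw [log_div ht0.ne' (by norm_num), show (8 : ℝ) = 2 ^ 3 by norm_num, log_pow] at h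
    push_cast at h
    linarith
  nlinarith

theorem mul_log_add_log_two_lt {n x : ℝ} (hn : 1024 ≤ n) (hx : 2 * n * log n < x) :
    n * log x + log 2 < x * log 2 := by
  set t := log n
  have hL := log_two_gt_d9
  have ht : 10 * log 2 ≤ t := by
    have h1024 : log (1024 : ℝ) = 10 * log 2 := by
      rw [show (1024 : ℝ) = 2 ^ 10 by norm_num, log_pow]; norm_num
    rw [← h1024]; exact log_le_log (by norm_num) hn
  have ht0 : 0 < t := by linarith
  have hs0 : 0 < 2 * n * t := by positivity
  have hx0 : 0 < x := by linarith
  have hlog_tangent : log x ≤ log 2 + t + log t + x / (2 * n * t) - 1 := by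
    have := log_le_sub_one_of_pos (div_pos hx0 hs0)
    rw [log_div hx0.ne' hs0.ne', log_mul (by positivity) ht0.ne',
      log_mul two_ne_zero (by positivity)] at this
    linarith
  have hcancel : 2 * t * (n * (x / (2 * n * t))) = x := by field_simp
  have hlower : 2 * n * t * (2 * t * log 2 - 1) < x * (2 * t * log 2 - 1) :=
    mul_lt_mul_of_pos_right hx (by nlinarith)
  have hkey := log_two_add_log_add_le_mul ht
  nlinarith [mul_le_mul_of_nonneg_left hlog_tangent (by positivity : (0 : ℝ) ≤ 2 * t * n),
    mul_le_mul_of_nonneg_left hkey (by positivity : (0 : ℝ) ≤ 2 * t * n), log_two_lt_d9]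

theorem le_primeCounting_of_two_mul_log_lt {n N : ℕ} (hn : 1024 ≤ n)
    (hN : 2 * n * log n < N) : n ≤ Nat.primeCounting N := by
  by_contra! hlt
  have hN1 : (1 : ℝ) ≤ N :=
    Nat.one_le_cast.2 (Nat.cast_pos.1 ((by positivity : (0 : ℝ) ≤ 2 * n * log n).trans_lt hN))
  have hπ : (Nat.primeCounting N : ℝ) ≤ n - 1 := by
    have : ((Nat.primeCounting N + 1 : ℕ) : ℝ) ≤ n := by exact_mod_cast hlt
    push_cast at this; linarith
  have hcheb : N * log 2 - log (N + 1) ≤ Nat.primeCounting N * log N :=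
    (Chebyshev.psi_ge N).trans (Chebyshev.psi_le_primeCounting_mul_log N)
  have hlog_succ : log (N + 1) ≤ log 2 + log N := by
    rw [← log_mul two_ne_zero (by positivity)]; exact log_le_log (by positivity) (by linarith)
  have := mul_le_mul_of_nonneg_right hπ (log_nonneg hN1)
  linarith [mul_log_add_log_two_lt (by exact_mod_cast hn) hN]

theorem le_primeCounting_two_mul_floor_add_one {n : ℕ} (hn : 4 ≤ n) :
    n ≤ Nat.primeCounting (2 * (⌊n * log n⌋₊ + 1)) := by
  rcases lt_or_ge n 1024 with hsmall | hlarge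
  · exact le_primeCounting_of_lt_1024 hn hsmall
  · refine le_primeCounting_of_two_mul_log_lt hlarge ?_
    push_cast
    linarith [Nat.lt_floor_add_one ((n : ℝ) * log n)]

theorem primeCounting_lt_iff_lt_nth {n x : ℕ} (hn : n ≠ 0) :
    Nat.primeCounting x < n ↔ x < Nat.nth Nat.Prime (n - 1) := by
  have := Nat.count_le_iff_le_nth (p := Nat.Prime) Nat.infinite_setOfPred_prime
    (a := x + 1) (b := n - 1)
  rw [Nat.primeCounting, Nat.primeCounting']
  omega

theorem two_mul_div_primeCounting_add (n x : ℕ) :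
    2 * n / (Nat.primeCounting x + n + 1) = if Nat.primeCounting x < n then 1 else 0 := by
  split_ifs with h
  · exact Nat.div_eq_of_lt_le (by omega) (by omega)
  · exact Nat.div_eq_of_lt (by omega)

theorem sum_Icc_ite_lt {a p N : ℕ} (hpN : p ≤ N + 1) :
    ∑ x ∈ Finset.Icc a N, (if x < p then 1 else 0) = p - a := by
  rw [Finset.sum_boole, Nat.cast_id, ← Nat.card_Ico a p]
  congr 1
  ext x
  simp only [Finset.mem_filter, Finset.mem_Icc, Finset.mem_Ico]
  omega

theorem nth_prime_formula_floor' (n : ℕ) (hn : 4 ≤ n) :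
    Nat.nth Nat.Prime (n - 1) =
      7 + ∑ x ∈ Finset.Icc 7 (2 * ((⌊(n : ℝ) * Real.log n⌋).toNat + 1)),
            2 * n / (Nat.primeCounting x + n + 1) := by
  have h7 : 7 ≤ Nat.nth Nat.Prime (n - 1) :=
    Nat.nth_prime_three_eq_seven ▸ Nat.nth_monotone Nat.infinite_setOfPred_prime (by omega)
  have hle : Nat.nth Nat.Prime (n - 1) ≤ 2 * ((⌊(n : ℝ) * Real.log n⌋).toNat + 1) := by
    rw [Int.floor_toNat, ← not_lt, ← primeCounting_lt_iff_lt_nth (by omega), not_lt]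
    exact le_primeCounting_two_mul_floor_add_one hn
  simp only [two_mul_div_primeCounting_add, primeCounting_lt_iff_lt_nth (show n ≠ 0 by omega)]
  rw [sum_Icc_ite_lt (by omega)]
  omega
end
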